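/- arXiv:funct-an/9605001 — 2 statements merged into one kernel-verified Lean document; each statement's English description precedes it below -/
import Mathlib

section
/- Let A be a unital C*-algebra in which the invertible elements are dense. Let a be a 2-by-2 matrix with entries in A and let \varepsilon > 0. Then there exists a norm-continuous path t \mapsto v(t), t in [0,1], of unitary 2-by-2 matrices over A with v(0) = 1 such that the (2,1) entry of the product v(1) \cdot a has norm strictly less than \varepsilon. -/
/-!
Approximate `a₀₀` by an invertible `u` and put `x = -a₁₀ u⁻¹`, so that `x a₀₀ + a₁₀ = x (a₀₀ - u)`
is small. The matrix `T = !![1, -x⋆; x, 1]` satisfies `T⋆T = TT⋆ = diag(1 + x⋆x, 1 + xx⋆)`, so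
`U(x) = diag((1 + x⋆x)^(-1/2), (1 + xx⋆)^(-1/2)) T` is unitary, and
`(U(x) a)₁₀ = U(x)₁₀ (a₀₀ - u)` has norm at most `‖a₀₀ - u‖` because the entries of a unitary
have norm at most one. The path is `t ↦ U(t x)`.
-/

section InvSqrtOneAdd

variable {A : Type*} [CStarAlgebra A]

noncomputable def invSqrtOneAdd (a : A) : A :=
  cfc (fun s : ℝ => (√(1 + s))⁻¹) a

lemma continuousOn_inv_sqrt_one_add :
    ContinuousOn (fun s : ℝ => (√(1 + s))⁻¹) (Set.Ioi (-1)) :=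
  (continuous_const.add continuous_id).sqrt.continuousOn.inv₀ fun _ hs =>
    (Real.sqrt_pos.mpr (neg_lt_iff_pos_add'.mp hs)).ne'

lemma isSelfAdjoint_invSqrtOneAdd (a : A) : IsSelfAdjoint (invSqrtOneAdd a) :=
  cfc_predicate _ a

lemma commute_invSqrtOneAdd {a : A} (ha : IsSelfAdjoint a) : Commute (invSqrtOneAdd a) a := by
  simpa only [invSqrtOneAdd, cfc_id' ℝ a ha] using
    cfc_commute_cfc (fun s : ℝ => (√(1 + s))⁻¹) (fun s => s) a

lemma invSqrtOneAdd_zero : invSqrtOneAdd (0 : A) = 1 := by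
  rw [invSqrtOneAdd, cfc_apply_zero]
  simp

variable [PartialOrder A] [StarOrderedRing A]

lemma spectrum_subset_Ioi_neg_one {a : A} (ha : 0 ≤ a) : spectrum ℝ a ⊆ Set.Ioi (-1) :=
  fun _ hs => neg_one_lt_zero.trans_le (spectrum_nonneg_of_nonneg ha hs)

lemma invSqrtOneAdd_mul_self_mul {a : A} (ha : 0 ≤ a) :
    invSqrtOneAdd a * invSqrtOneAdd a * (1 + a) = 1 := by
  have hcont := continuousOn_inv_sqrt_one_add.mono (spectrum_subset_Ioi_neg_one ha)
  have hone_add : cfc (fun s : ℝ => 1 + s) a = 1 + a := by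
    rw [cfc_const_add 1 (fun s => s) a, cfc_id' ℝ a, map_one]
  calc invSqrtOneAdd a * invSqrtOneAdd a * (1 + a)
      = cfc (fun s : ℝ => (√(1 + s))⁻¹ * (√(1 + s))⁻¹ * (1 + s)) a := by
        rw [← hone_add, invSqrtOneAdd, ← cfc_mul _ _ a hcont hcont,
          ← cfc_mul (fun s : ℝ => (√(1 + s))⁻¹ * (√(1 + s))⁻¹) _ a (hcont.mul hcont)]
    _ = cfc (fun _ : ℝ => (1 : ℝ)) a := cfc_congr fun s hs => by
        have h1 : 0 < 1 + s := neg_lt_iff_pos_add'.mp (spectrum_subset_Ioi_neg_one ha hs)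
        rw [← mul_inv, Real.mul_self_sqrt h1.le, inv_mul_cancel₀ h1.ne']
    _ = 1 := cfc_const_one ℝ a

lemma Continuous.invSqrtOneAdd {X : Type*} [TopologicalSpace X] {g : X → A} (hg : Continuous g)
    (hg0 : ∀ x, 0 ≤ g x) : Continuous fun x => invSqrtOneAdd (g x) :=
  hg.cfc_of_mem_nhdsSet _ (isOpen_Ioi.mem_nhdsSet.mpr
    (Set.iUnion_subset fun x => spectrum_subset_Ioi_neg_one (hg0 x)))
    (fun x => (hg0 x).isSelfAdjoint) continuousOn_inv_sqrt_one_add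

lemma invSqrtOneAdd_mul_one_add_mul {a : A} (ha : 0 ≤ a) :
    invSqrtOneAdd a * (1 + a) * invSqrtOneAdd a = 1 := by
  have hcomm := (Commute.one_right _).add_right (commute_invSqrtOneAdd ha.isSelfAdjoint)
  rw [mul_assoc, hcomm.symm.eq, ← mul_assoc, invSqrtOneAdd_mul_self_mul ha]

end InvSqrtOneAdd

lemma mul_mem_unitary_of_star_mul_self_eq_mul_star_self {R : Type*} [Monoid R] [StarMul R]
    {d t δ : R} (hd : IsSelfAdjoint d) (hdδd : d * δ * d = 1) (hddδ : d * d * δ = 1)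
    (htt : star t * t = δ) (htt' : t * star t = δ) : d * t ∈ unitary R := by
  have hright : d * t * star (d * t) = 1 := by
    rw [star_mul, hd.star_eq, mul_assoc, ← mul_assoc t, htt', ← mul_assoc, hdδd]
  -- a left inverse of `d * t`, hence equal to its right inverse `star (d * t)`
  have hleft : d * d * star t * (d * δ) * (d * t) = 1 :=
    calc d * d * star t * (d * δ) * (d * t) = d * d * star t * (d * δ * d) * t := by
          simp only [mul_assoc]
      _ = d * d * δ := by rw [hdδd, mul_one, mul_assoc, htt]
      _ = 1 := hddδ
  refine ⟨?_, hright⟩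
  rwa [← left_inv_eq_right_inv hleft hright]

section Matrix

open Matrix

variable {R : Type*} [Ring R] [StarRing R]

lemma star_mul_self_eq_diagonal_one_add (x : R) :
    star !![1, -star x; x, 1] * !![1, -star x; x, 1] =
      diagonal ![1 + star x * x, 1 + x * star x] := by
  ext i j
  fin_cases i <;> fin_cases j <;> simp [Matrix.mul_apply, Matrix.star_apply, add_comm]

lemma mul_star_self_eq_diagonal_one_add (x : R) :
    !![1, -star x; x, 1] * star !![1, -star x; x, 1] =
      diagonal ![1 + star x * x, 1 + x * star x] := by
  ext i j
  fin_cases i <;> fin_cases j <;> simp [Matrix.mul_apply, Matrix.star_apply, add_comm]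

end Matrix

lemma norm_apply_le_one_of_star_mul_self_eq_one {A : Type*} [CStarAlgebra A] [PartialOrder A]
    [StarOrderedRing A] {n : Type*} [Fintype n] [DecidableEq n] {v : Matrix n n A}
    (hv : star v * v = 1) (i j : n) : ‖v i j‖ ≤ 1 := by
  have hcol : ∑ k, star (v k j) * v k j = 1 := by
    simpa [Matrix.mul_apply, Matrix.star_apply] using congr_fun (congr_fun hv j) j
  have hle : star (v i j) * v i j ≤ 1 :=
    hcol ▸ Finset.single_le_sum (fun k _ => star_mul_self_nonneg (v k j)) (Finset.mem_univ i)
  have hsq : ‖v i j‖ * ‖v i j‖ ≤ 1 := by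
    rw [← CStarRing.norm_star_mul_self]
    exact (CStarAlgebra.norm_le_one_iff_of_nonneg _).mpr hle
  nlinarith [norm_nonneg (v i j)]

section RotationMatrix

open Matrix

variable {A : Type*} [CStarAlgebra A]

/-- The unitary part of the polar decomposition of `!![1, -star x; x, 1]`; for real scalar `x`
it is the rotation by `arctan x`. -/
noncomputable def rotationMatrix (x : A) : Matrix (Fin 2) (Fin 2) A :=
  diagonal ![invSqrtOneAdd (star x * x), invSqrtOneAdd (x * star x)] * !![1, -star x; x, 1]

lemma rotationMatrix_zero : rotationMatrix (0 : A) = 1 := by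
  ext i j
  fin_cases i <;> fin_cases j <;> simp [rotationMatrix, invSqrtOneAdd_zero]

lemma rotationMatrix_mul_apply_one_zero (x : A) (a : Matrix (Fin 2) (Fin 2) A) :
    (rotationMatrix x * a) 1 0 = invSqrtOneAdd (x * star x) * (x * a 0 0 + a 1 0) := by
  simp [rotationMatrix, Matrix.mul_apply, Fin.sum_univ_two, mul_add, mul_assoc]

lemma rotationMatrix_apply_one_zero (x : A) :
    rotationMatrix x 1 0 = invSqrtOneAdd (x * star x) * x := by
  simp [rotationMatrix, Matrix.mul_apply, Fin.sum_univ_two]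

lemma continuous_rotationMatrix [PartialOrder A] [StarOrderedRing A] :
    Continuous (rotationMatrix : A → Matrix (Fin 2) (Fin 2) A) := by
  refine Continuous.matrix_mul (Continuous.matrix_diagonal ?_) ?_
  · refine continuous_pi fun i => ?_
    fin_cases i
    · exact (continuous_star.mul continuous_id).invSqrtOneAdd fun x => star_mul_self_nonneg x
    · exact (continuous_id.mul continuous_star).invSqrtOneAdd fun x => mul_star_self_nonneg x
  · refine continuous_matrix fun i j => ?_
    fin_cases i <;> fin_cases j <;> simp <;> fun_prop

lemma rotationMatrix_mem_unitary [PartialOrder A] [StarOrderedRing A] (x : A) :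
    rotationMatrix x ∈ unitary (Matrix (Fin 2) (Fin 2) A) := by
  have hp := star_mul_self_nonneg x
  have hq := mul_star_self_nonneg x
  refine mul_mem_unitary_of_star_mul_self_eq_mul_star_self ?_ ?_ ?_
    (star_mul_self_eq_diagonal_one_add x) (mul_star_self_eq_diagonal_one_add x)
  · refine isHermitian_diagonal_iff.mpr fun i => ?_
    fin_cases i <;> exact isSelfAdjoint_invSqrtOneAdd _
  · simp [invSqrtOneAdd_mul_one_add_mul hp, invSqrtOneAdd_mul_one_add_mul hq, ← diagonal_one]
  · simp [invSqrtOneAdd_mul_self_mul hp, invSqrtOneAdd_mul_self_mul hq, ← diagonal_one]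

end RotationMatrix

/-- (Making matrices almost upper triangular.) Let `A` be a unital C*-algebra in which
the invertible elements are dense. For every 2×2 matrix `a` over `A` and every `ε > 0`
there is a norm-continuous path `t ↦ v(t)` of unitaries of `M₂(A)` with `v(0) = 1`
such that the `(2,1)` entry of `v(1) * a` has norm `< ε`. -/
theorem exists_unitary_path_triangularize
    {A : Type*} [CStarAlgebra A]
    (hTSR1 : ∀ a : A, ∀ ε > (0:ℝ), ∃ b : A, IsUnit b ∧ ‖a - b‖ < ε)
    (a : Matrix (Fin 2) (Fin 2) A) (ε : ℝ) (hε : 0 < ε) :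
    ∃ v : ℝ → Matrix (Fin 2) (Fin 2) A,
      ContinuousOn v (Set.Icc 0 1) ∧
      v 0 = 1 ∧
      (∀ t ∈ Set.Icc (0:ℝ) 1, star (v t) * v t = 1 ∧ v t * star (v t) = 1) ∧
      ‖(v 1 * a) 1 0‖ < ε := by
  let _ := CStarAlgebra.spectralOrder A
  have := CStarAlgebra.spectralOrderedRing A
  obtain ⟨_, ⟨u, rfl⟩, hu⟩ := hTSR1 (a 0 0) ε hε
  set x : A := -(a 1 0 * ↑u⁻¹)
  have hxu : x * u = -a 1 0 := by simp [x, mul_assoc]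
  have hentry : (rotationMatrix x * a) 1 0 = rotationMatrix x 1 0 * (a 0 0 - u) := by
    rw [rotationMatrix_mul_apply_one_zero, rotationMatrix_apply_one_zero, mul_assoc, mul_sub, hxu,
      sub_neg_eq_add]
  refine ⟨fun t => rotationMatrix (t • x),
    (continuous_rotationMatrix.comp (continuous_id.smul continuous_const)).continuousOn,
    by simp [rotationMatrix_zero], fun t _ => rotationMatrix_mem_unitary (t • x), ?_⟩
  calc ‖(rotationMatrix ((1 : ℝ) • x) * a) 1 0‖
      = ‖rotationMatrix x 1 0 * (a 0 0 - u)‖ := by rw [one_smul, hentry]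
    _ ≤ ‖rotationMatrix x 1 0‖ * ‖a 0 0 - u‖ := norm_mul_le _ _
    _ ≤ 1 * ‖a 0 0 - u‖ := by
      gcongr
      exact norm_apply_le_one_of_star_mul_self_eq_one (rotationMatrix_mem_unitary x).1 1 0
    _ < ε := by rwa [one_mul]
end

section
/- Let A be a unital C*-algebra, n a positive integer, p_1,...,p_n mutually orthogonal projections in A with \sum_{i=1}^n p_i = 1, and \lambda_1,...,\lambda_n real numbers. Set h = \sum_{i=1}^n \lambda_i p_i. Let u be an element of A with \|h u - u h\| \le \varepsilon and let \gamma > 0. Define d(u) = \sum_{(i,j) : |\lambda_i - \lambda_j| < \gamma} p_i u p_j, the sum being over all pairs (i,j) with |\lambda_i - \lambda_j| < \gamma. Then \|u - d(u)\| \le \sqrt{n} \, \varepsilon / \gamma. -/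
open Finset

section helpers
variable {A : Type*} [CStarAlgebra A] {n : ℕ} {p : Fin n → A}

private lemma aux_norm_one_le : ‖(1:A)‖ ≤ 1 := by
  have h1 := CStarRing.norm_star_mul_self (x := (1:A))
  rw [star_one, one_mul] at h1
  nlinarith [norm_nonneg (1:A)]

private lemma aux_pyth (b : Fin n → A)
    (horth : ∀ i j, i ≠ j → star (b i) * b j = 0) :
    ‖∑ i, b i‖ ^ 2 ≤ ∑ i, ‖b i‖ ^ 2 := by
  have key : star (∑ i, b i) * (∑ i, b i) = ∑ i, star (b i) * b i := by
    rw [star_sum, Finset.sum_mul_sum]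
    refine Finset.sum_congr rfl fun i _ => ?_
    exact Finset.sum_eq_single i (fun j _ hj => horth i j (Ne.symm hj)) (by simp)
  calc ‖∑ i, b i‖ ^ 2 = ‖star (∑ i, b i) * (∑ i, b i)‖ := by
        rw [CStarRing.norm_star_mul_self, sq]
    _ = ‖∑ i, star (b i) * b i‖ := by rw [key]
    _ ≤ ∑ i, ‖star (b i) * b i‖ := norm_sum_le _ _
    _ = ∑ i, ‖b i‖ ^ 2 := by
        refine Finset.sum_congr rfl fun i _ => ?_
        rw [CStarRing.norm_star_mul_self, sq]

private lemma aux_mul (hp_proj : ∀ i, star (p i) = p i ∧ p i * p i = p i)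
    (hp_orth : ∀ i j, i ≠ j → p i * p j = 0)
    (S T : Finset (Fin n)) (ν ρ : Fin n → ℂ) :
    (∑ j ∈ S, ν j • p j) * (∑ k ∈ T, ρ k • p k)
      = ∑ j ∈ S ∩ T, (ν j * ρ j) • p j := by
  rw [Finset.sum_mul_sum, ← Finset.sum_ite_mem S T]
  refine Finset.sum_congr rfl fun j _ => ?_
  calc ∑ k ∈ T, (ν j • p j) * (ρ k • p k)
      = ∑ k ∈ T, if k = j then (ν j * ρ j) • p j else 0 := by
        refine Finset.sum_congr rfl fun k _ => ?_
        rw [smul_mul_assoc, mul_smul_comm, smul_smul]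
        by_cases hkj : k = j
        · subst hkj; rw [(hp_proj k).2, if_pos rfl]
        · rw [hp_orth j k (Ne.symm hkj), if_neg hkj, smul_zero]
    _ = if j ∈ T then (ν j * ρ j) • p j else 0 := Finset.sum_ite_eq' T j _

private lemma aux_comb (hp_proj : ∀ i, star (p i) = p i ∧ p i * p i = p i)
    (hp_orth : ∀ i j, i ≠ j → p i * p j = 0)
    (hp_sum : ∑ i, p i = 1)
    (S : Finset (Fin n)) (μ : Fin n → ℂ) (M : ℝ) (hM : 0 ≤ M)
    (hμ : ∀ j ∈ S, ‖μ j‖ ≤ M) :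
    ‖∑ j ∈ S, μ j • p j‖ ≤ M := by
  letI := CStarAlgebra.spectralOrder A
  haveI := CStarAlgebra.spectralOrderedRing A
  set x := ∑ j ∈ S, μ j • p j with hx
  have hpos : ∀ (c : ℝ) (j : Fin n), 0 ≤ c → (0:A) ≤ (c:ℂ) • p j := by
    intro c j hc
    have heq : (c:ℂ) • p j
        = star ((Real.sqrt c : ℂ) • p j) * ((Real.sqrt c : ℂ) • p j) := by
      rw [star_smul, (hp_proj j).1, Complex.star_def, Complex.conj_ofReal,
        smul_mul_assoc, mul_smul_comm, smul_smul, (hp_proj j).2]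
      norm_cast
      rw [Real.mul_self_sqrt hc]
    rw [heq]
    exact star_mul_self_nonneg _
  have hsq : star x * x = ∑ j ∈ S, ((‖μ j‖ ^ 2 : ℝ) : ℂ) • p j := by
    rw [hx, star_sum]
    have : ∀ j ∈ S, star (μ j • p j) = (starRingEnd ℂ) (μ j) • p j := fun j _ => by
      rw [star_smul, (hp_proj j).1, Complex.star_def]
    rw [Finset.sum_congr rfl this, aux_mul hp_proj hp_orth, Finset.inter_self]
    refine Finset.sum_congr rfl fun j _ => ?_
    rw [RCLike.conj_mul]; norm_cast
  have hone : ((M ^ 2 : ℝ) : ℂ) • (1:A) - star x * x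
      = ∑ j, (((if j ∈ S then M ^ 2 - ‖μ j‖ ^ 2 else M ^ 2 : ℝ)) : ℂ) • p j := by
    rw [hsq, ← hp_sum, Finset.smul_sum, ← Finset.univ_inter S,
      ← Finset.sum_ite_mem Finset.univ S, ← Finset.sum_sub_distrib]
    refine Finset.sum_congr rfl fun j _ => ?_
    simp only [Finset.univ_inter]
    split_ifs with hj
    · push_cast
      rw [sub_smul]
    · push_cast
      rw [sub_zero]
  have hnn : (0:A) ≤ ((M ^ 2 : ℝ) : ℂ) • (1:A) - star x * x := by
    rw [hone]
    refine Finset.sum_nonneg fun j _ => hpos _ j ?_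
    split_ifs with hj
    · nlinarith [hμ j hj, norm_nonneg (μ j)]
    · positivity
  have hle : star x * x ≤ ((M ^ 2 : ℝ) : ℂ) • (1:A) := sub_nonneg.mp hnn
  have hnorm : ‖star x * x‖ ≤ M ^ 2 := by
    refine le_trans (CStarAlgebra.norm_le_norm_of_nonneg_of_le
      (star_mul_self_nonneg x) hle) ?_
    rw [norm_smul]
    calc ‖((M ^ 2 : ℝ) : ℂ)‖ * ‖(1:A)‖ ≤ ‖((M ^ 2 : ℝ) : ℂ)‖ * 1 := by
          gcongr; exact aux_norm_one_le
      _ = M ^ 2 := by simp [abs_of_nonneg (sq_nonneg M)]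
  have hx2 : ‖x‖ ^ 2 ≤ M ^ 2 := by
    rw [sq, ← CStarRing.norm_star_mul_self]; simpa [sq] using hnorm
  nlinarith [norm_nonneg x]

end helpers

/-- If `h = ∑ λᵢ pᵢ` for mutually orthogonal projections summing to `1`,
`‖hu - uh‖ ≤ ε`, `γ > 0`, and `d(u) = ∑_{|λᵢ-λⱼ|<γ} pᵢ u pⱼ`, then
`‖u - d(u)‖ ≤ √n ε / γ`. -/
theorem norm_sub_block_diagonal_le
    {A : Type*} [CStarAlgebra A]
    (n : ℕ) (hn : 0 < n) (p : Fin n → A) (lam : Fin n → ℝ)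
    (hp_proj : ∀ i, star (p i) = p i ∧ p i * p i = p i)
    (hp_orth : ∀ i j, i ≠ j → p i * p j = 0)
    (hp_sum : ∑ i, p i = 1)
    (h : A) (hh : h = ∑ i, (lam i : ℂ) • p i)
    (u : A) (ε : ℝ) (hu : ‖h * u - u * h‖ ≤ ε)
    (γ : ℝ) (hγ : 0 < γ)
    (du : A)
    (hdu : du = ∑ ij ∈ Finset.univ.filter
      (fun ij : Fin n × Fin n => |lam ij.1 - lam ij.2| < γ), p ij.1 * u * p ij.2) :
    ‖u - du‖ ≤ Real.sqrt n * ε / γ := by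
  classical
  set c : A := h * u - u * h with hc
  have hε : 0 ≤ ε := le_trans (norm_nonneg _) hu
  set B : Fin n → Finset (Fin n) :=
    fun i => Finset.univ.filter (fun j => ¬ |lam i - lam j| < γ) with hB
  set b : Fin n → A := fun i => ∑ j ∈ B i, p i * u * p j with hb_def
  -- key commutator identity
  have hpcp : ∀ i j, p i * c * p j = ((lam i - lam j : ℝ) : ℂ) • (p i * u * p j) := by
    intro i j
    have hph : p i * h = (lam i : ℂ) • p i := by
      rw [hh, Finset.mul_sum,
        Finset.sum_eq_single i (fun k _ hk => by
          rw [mul_smul_comm, hp_orth i k (Ne.symm hk), smul_zero]) (by simp),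
        mul_smul_comm, (hp_proj i).2]
    have hhp : h * p j = (lam j : ℂ) • p j := by
      rw [hh, Finset.sum_mul,
        Finset.sum_eq_single j (fun k _ hk => by
          rw [smul_mul_assoc, hp_orth k j hk, smul_zero]) (by simp),
        smul_mul_assoc, (hp_proj j).2]
    have e1 : p i * c * p j = (p i * h) * (u * p j) - (p i * u) * (h * p j) := by
      rw [hc]; noncomm_ring
    rw [e1, hph, hhp, smul_mul_assoc, mul_smul_comm, ← mul_assoc, ← sub_smul]
    norm_cast
  -- decomposition of u - du
  have hdecomp : u - du = ∑ i, b i := by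
    have hu1 : u = ∑ ij : Fin n × Fin n, p ij.1 * u * p ij.2 := by
      conv_lhs => rw [← one_mul u, ← mul_one (1 * u), ← hp_sum]
      rw [Finset.sum_mul, Finset.sum_mul_sum, ← Finset.univ_product_univ,
        Finset.sum_product]
    have hsplit := Finset.sum_filter_add_sum_filter_not Finset.univ
      (fun ij : Fin n × Fin n => |lam ij.1 - lam ij.2| < γ)
      (fun ij => p ij.1 * u * p ij.2)
    have : u - du = ∑ ij ∈ Finset.univ.filter
        (fun ij : Fin n × Fin n => ¬ |lam ij.1 - lam ij.2| < γ),
        p ij.1 * u * p ij.2 := by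
      rw [sub_eq_iff_eq_add, hdu]
      exact hu1.trans (hsplit.symm.trans (add_comm _ _))
    rw [this, Finset.sum_filter, ← Finset.univ_product_univ, Finset.sum_product]
    refine Finset.sum_congr rfl fun i _ => ?_
    rw [hb_def, hB]
    simp only [Finset.sum_filter]
  -- orthogonality of the b i
  have hb_eq : ∀ i, b i = p i * (u * ∑ j ∈ B i, p j) := by
    intro i
    rw [hb_def, Finset.mul_sum, Finset.mul_sum]
    exact Finset.sum_congr rfl fun j _ => by rw [mul_assoc]
  have horth : ∀ i k, i ≠ k → star (b i) * b k = 0 := by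
    intro i k hik
    rw [hb_eq i, hb_eq k]
    have h0 : p i * (p k * (u * ∑ j ∈ B k, p j)) = 0 := by
      rw [← mul_assoc, hp_orth i k hik, zero_mul]
    rw [star_mul, (hp_proj i).1, mul_assoc, h0, mul_zero]
  -- norm bound for each b i
  have hb : ∀ i, ‖b i‖ ≤ ε / γ := by
    intro i
    set f : A := ∑ j ∈ B i, (((lam i - lam j)⁻¹ : ℝ) : ℂ) • p j with hf
    have hbi : b i = (p i * c) * f := by
      rw [hf, Finset.mul_sum, hb_def]
      refine Finset.sum_congr rfl fun j hj => ?_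
      have hge : γ ≤ |lam i - lam j| := by
        rw [hB] at hj
        simpa using (Finset.mem_filter.mp hj).2
      have hne : lam i - lam j ≠ 0 := by
        intro h0
        rw [h0, abs_zero] at hge
        linarith
      rw [mul_smul_comm, hpcp i j, smul_smul, ← Complex.ofReal_mul,
        inv_mul_cancel₀ hne, Complex.ofReal_one, one_smul]
    have hpi : ‖p i‖ ≤ 1 := by
      have := aux_comb hp_proj hp_orth hp_sum {i} (fun _ => (1:ℂ)) 1 zero_le_one
        (fun j _ => by simp)
      simpa using this
    have hfn : ‖f‖ ≤ γ⁻¹ := by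
      refine aux_comb hp_proj hp_orth hp_sum (B i) _ γ⁻¹ (by positivity) ?_
      intro j hj
      have hge : γ ≤ |lam i - lam j| := by
        rw [hB] at hj
        simpa using (Finset.mem_filter.mp hj).2
      rw [Complex.norm_real, Real.norm_eq_abs, abs_inv]
      exact inv_anti₀ hγ hge
    calc ‖b i‖ ≤ ‖p i * c‖ * ‖f‖ := hbi ▸ norm_mul_le _ _
      _ ≤ (‖p i‖ * ‖c‖) * ‖f‖ := by
          gcongr
          exact norm_mul_le _ _
      _ ≤ (1 * ε) * γ⁻¹ := by
          refine mul_le_mul (mul_le_mul hpi hu (norm_nonneg _) zero_le_one) hfn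
            (norm_nonneg _) (by positivity)
      _ = ε / γ := by rw [one_mul, div_eq_mul_inv]
  -- combine
  have hsum := aux_pyth b horth
  have hεγ : 0 ≤ ε / γ := div_nonneg hε hγ.le
  have h2 : ‖∑ i, b i‖ ^ 2 ≤ n * (ε / γ) ^ 2 := by
    refine hsum.trans ?_
    calc ∑ i, ‖b i‖ ^ 2 ≤ ∑ _i : Fin n, (ε / γ) ^ 2 :=
          Finset.sum_le_sum fun i _ => pow_le_pow_left₀ (norm_nonneg _) (hb i) 2
      _ = n * (ε / γ) ^ 2 := by
          rw [Finset.sum_const, Finset.card_univ, Fintype.card_fin, nsmul_eq_mul]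
  have hfinal : ‖∑ i, b i‖ ≤ Real.sqrt (n * (ε / γ) ^ 2) := by
    rw [show (‖∑ i, b i‖) = Real.sqrt (‖∑ i, b i‖ ^ 2) from
      (Real.sqrt_sq (norm_nonneg _)).symm]
    exact Real.sqrt_le_sqrt h2
  rw [hdecomp]
  refine hfinal.trans (le_of_eq ?_)
  rw [Real.sqrt_mul (Nat.cast_nonneg n), Real.sqrt_sq hεγ, mul_div_assoc]
end
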